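/- arXiv:1812.02416 — 3 statements merged into one kernel-verified Lean document; each statement's English description precedes it below -/
import Mathlib

section
/- Let γ be a probability (or more generally bounded nonnegative) measure on a measurable space, let g ≥ 0 be a measurable function, and define u(g,ε) = ∫₀^∞ (s+1)^{-2} γ(g ≤ εs) ds. Then for every r ≥ 1 and ε > 0, ∫ (g+ε)^{-r} dγ ≤ r ε^{-r} u(g,ε). -/
open MeasureTheory Real
noncomputable section

/-- Euclidean space ℝ^k. -/
abbrev Ek (k : ℕ) := EuclideanSpace ℝ (Fin k)

/-- Integral of a function against a finite signed measure (via Jordan decomposition). -/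
def sInt {E : Type*} [MeasurableSpace E] (μ : SignedMeasure E) (φ : E → ℝ) : ℝ :=
  ∫ x, φ x ∂μ.toJordanDecomposition.posPart - ∫ x, φ x ∂μ.toJordanDecomposition.negPart

/-- Shift of a signed measure: (shiftSM μ h) A = μ (A - h). -/
def shiftSM {E : Type*} [MeasurableSpace E] [Add E] (μ : SignedMeasure E) (h : E) :
    SignedMeasure E := μ.map (· + h)

/-- The modulus σ(μ,t) for a signed measure on ℝ^k (Definition 2.1). -/
def sigmaSM {k : ℕ} (μ : SignedMeasure (Ek k)) (t : ℝ) : ℝ :=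
  sSup {r | ∃ (φ : Ek k → ℝ) (e : Ek k), ContDiff ℝ (⊤ : ℕ∞) φ ∧ HasCompactSupport φ ∧
    ‖e‖ = 1 ∧ (∀ x, |φ x| ≤ t) ∧ (∀ x, |fderiv ℝ φ x e| ≤ 1) ∧
    r = sInt μ (fun x => fderiv ℝ φ x e)}

/-- Total variation norm of a signed measure, as a supremum over smooth test functions. -/
def tvSM {k : ℕ} (μ : SignedMeasure (Ek k)) : ℝ :=
  sSup {r | ∃ φ : Ek k → ℝ, ContDiff ℝ (⊤ : ℕ∞) φ ∧ HasCompactSupport φ ∧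
    (∀ x, |φ x| ≤ 1) ∧ r = sInt μ φ}

/-- Total variation distance between two (finite) measures, sup over smooth test functions. -/
def tvDist {E : Type*} [MeasurableSpace E] [NormedAddCommGroup E] [InnerProductSpace ℝ E]
    (μ ν : Measure E) : ℝ :=
  sSup {r | ∃ φ : E → ℝ, ContDiff ℝ (⊤ : ℕ∞) φ ∧ HasCompactSupport φ ∧
    (∀ x, |φ x| ≤ 1) ∧ r = ∫ x, φ x ∂μ - ∫ x, φ x ∂ν}

/-- Kantorovich–Rubinstein distance between two measures. -/
def krDist {E : Type*} [MeasurableSpace E] [NormedAddCommGroup E] [InnerProductSpace ℝ E]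
    (μ ν : Measure E) : ℝ :=
  sSup {r | ∃ φ : E → ℝ, ContDiff ℝ (⊤ : ℕ∞) φ ∧ HasCompactSupport φ ∧
    (∀ x, |φ x| ≤ 1) ∧ (∀ x, ‖fderiv ℝ φ x‖ ≤ 1) ∧ r = ∫ x, φ x ∂μ - ∫ x, φ x ∂ν}

/-- σ(μ − ν, t) for two measures. -/
def sigmaDiff {k : ℕ} (μ ν : Measure (Ek k)) (t : ℝ) : ℝ :=
  sSup {r | ∃ (φ : Ek k → ℝ) (e : Ek k), ContDiff ℝ (⊤ : ℕ∞) φ ∧ HasCompactSupport φ ∧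
    ‖e‖ = 1 ∧ (∀ x, |φ x| ≤ t) ∧ (∀ x, |fderiv ℝ φ x e| ≤ 1) ∧
    r = ∫ x, fderiv ℝ φ x e ∂μ - ∫ x, fderiv ℝ φ x e ∂ν}

/-- σ(μ, t) for a single measure on ℝ^k. -/
def sigmaMeas {k : ℕ} (μ : Measure (Ek k)) (t : ℝ) : ℝ :=
  sSup {r | ∃ (φ : Ek k → ℝ) (e : Ek k), ContDiff ℝ (⊤ : ℕ∞) φ ∧ HasCompactSupport φ ∧
    ‖e‖ = 1 ∧ (∀ x, |φ x| ≤ t) ∧ (∀ x, |fderiv ℝ φ x e| ≤ 1) ∧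
    r = ∫ x, fderiv ℝ φ x e ∂μ}

/-- The standard Gaussian measure on ℝ^n. -/
def gaussE (n : ℕ) : Measure (Ek n) :=
  volume.withDensity (fun x => ENNReal.ofReal ((2 * π) ^ (-(n : ℝ) / 2) * exp (-‖x‖ ^ 2 / 2)))

/-- Hessian of f as a continuous linear map (the second derivative). -/
def hess {n : ℕ} (f : Ek n → ℝ) (x : Ek n) : Ek n →L[ℝ] Ek n := fderiv ℝ (gradient f) x

/-- Hilbert–Schmidt norm of an operator on ℝ^n. -/
def hsN {n : ℕ} (A : Ek n →L[ℝ] Ek n) : ℝ :=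
  Real.sqrt (∑ i, ∑ j,
    (inner ℝ (A (EuclideanSpace.single i 1)) (EuclideanSpace.single j 1) : ℝ) ^ 2)

/-- Ornstein–Uhlenbeck operator Lf = Δf − ⟨x, ∇f⟩. -/
def ouL {n : ℕ} (f : Ek n → ℝ) (x : Ek n) : ℝ :=
  (∑ i, (inner ℝ (hess f x (EuclideanSpace.single i 1)) (EuclideanSpace.single i 1) : ℝ)) -
    (inner ℝ x (gradient f x) : ℝ)

/-- Gaussian L^p norm. -/
def lpN {X : Type*} [MeasurableSpace X] (γ : Measure X) (p : ℝ) (f : X → ℝ) : ℝ :=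
  (∫ x, |f x| ^ p ∂γ) ^ (1 / p)

/-- Gaussian Sobolev W^{p,2} norm of a scalar function. -/
def wNorm {n : ℕ} (p : ℝ) (f : Ek n → ℝ) : ℝ :=
  lpN (gaussE n) p f + lpN (gaussE n) p (fun x => ‖gradient f x‖) +
    lpN (gaussE n) p (fun x => hsN (hess f x))

/-- The class C_b^∞: smooth with all derivatives bounded. -/
def CbInf {n : ℕ} (f : Ek n → ℝ) : Prop :=
  ContDiff ℝ (⊤ : ℕ∞) f ∧ ∀ i : ℕ, ∃ C, ∀ x, ‖iteratedFDeriv ℝ i f x‖ ≤ C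

/-- Malliavin matrix of a map f : ℝ^n → ℝ^k. -/
def mall {n k : ℕ} (f : Ek n → Ek k) (x : Ek n) : Matrix (Fin k) (Fin k) ℝ :=
  fun i j => (inner ℝ (gradient (fun y => f y i) x) (gradient (fun y => f y j) x) : ℝ)

/-- Malliavin determinant Δ_f. -/
def malDet {n k : ℕ} (f : Ek n → Ek k) (x : Ek n) : ℝ := (mall f x).det

/-- u_γ(g, ε) = ∫₀^∞ (s+1)^{-2} γ(g ≤ εs) ds. -/
def uGamma {X : Type*} [MeasurableSpace X] (γ : Measure X) (g : X → ℝ) (ε : ℝ) : ℝ :=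
  ∫ s in Set.Ioi (0:ℝ), (s + 1) ^ (-(2:ℝ)) * (γ {x | g x ≤ ε * s}).toReal

/-! By Tonelli, `uGamma γ g ε = ε ∫ (g + ε)⁻¹ dγ`: for fixed `x` the `s`-integral runs over
`s ≥ g x / ε` and `∫_{a}^∞ (s + 1)⁻² ds = (a + 1)⁻¹`. The bound is then the pointwise estimate
`(g + ε)^{-r} = (g + ε)^{1-r} (g + ε)⁻¹ ≤ ε^{1-r} (g + ε)⁻¹` together with `1 ≤ r`. -/

open Set Filter

lemma rpow_neg_two_eq_inv_sq (s : ℝ) : s ^ (-2 : ℝ) = (s ^ 2)⁻¹ := by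
  rw [Real.rpow_neg_ofNat, zpow_neg, zpow_ofNat]

lemma lintegral_Ioi_add_one_rpow_neg_two {a : ℝ} (ha : -1 < a) :
    ∫⁻ s in Ioi a, ENNReal.ofReal ((s + 1) ^ (-2 : ℝ)) = ENNReal.ofReal (a + 1)⁻¹ := by
  have hderiv : ∀ s ∈ Ici a, HasDerivAt (fun t => -(t + 1)⁻¹) ((s + 1) ^ (-2 : ℝ)) s := by
    intro s hs
    have hs1 : s + 1 ≠ 0 := by linarith [mem_Ici.mp hs]
    refine (((hasDerivAt_id s).add_const 1).inv hs1).neg.congr_deriv ?_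
    rw [rpow_neg_two_eq_inv_sq, neg_div, neg_neg, one_div, id]
  have hpos : ∀ s ∈ Ioi a, 0 ≤ (s + 1) ^ (-2 : ℝ) := fun s _ => by
    rw [rpow_neg_two_eq_inv_sq]; positivity
  have hlim : Tendsto (fun t : ℝ => -(t + 1)⁻¹) atTop (nhds 0) := by
    simpa using
      (tendsto_inv_atTop_zero.comp (tendsto_atTop_add_const_right atTop (1 : ℝ) tendsto_id)).neg
  rw [← ofReal_integral_eq_lintegral_ofReal (integrableOn_Ioi_deriv_of_nonneg' hderiv hpos hlim)
    ((ae_restrict_iff' measurableSet_Ioi).mpr (Eventually.of_forall hpos)),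
    integral_Ioi_of_hasDerivAt_of_nonneg' hderiv hpos hlim]
  simp

section

variable {X : Type*} [MeasurableSpace X]

lemma setLIntegral_Ioi_add_one_rpow_neg_two_mul_measure_sublevel (γ : Measure X) [SFinite γ]
    {g : X → ℝ} (hgm : Measurable g) (hg0 : ∀ x, 0 ≤ g x) {ε : ℝ} (hε : 0 < ε) :
    ∫⁻ s in Ioi 0, ENNReal.ofReal ((s + 1) ^ (-2 : ℝ)) * γ {x | g x ≤ ε * s}
      = ∫⁻ x, ENNReal.ofReal (ε / (g x + ε)) ∂γ := by
  set w : ℝ → ENNReal := fun s => ENNReal.ofReal ((s + 1) ^ (-2 : ℝ))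
  set S : Set (ℝ × X) := {p | g p.2 ≤ ε * p.1}
  have hS : MeasurableSet S := measurableSet_le (by fun_prop) (by fun_prop)
  have hF : Measurable (S.indicator (w ∘ Prod.fst)) :=
    (Measurable.ennreal_ofReal (by fun_prop)).indicator hS
  have fibre_fst (s : ℝ) : (fun x => S.indicator (w ∘ Prod.fst) (s, x))
      = {x | g x ≤ ε * s}.indicator (fun _ => w s) := by
    ext x; by_cases h : g x ≤ ε * s <;> simp [S, h]
  have fibre_snd (x : X) : (fun s => S.indicator (w ∘ Prod.fst) (s, x))
      = (Ici (g x / ε)).indicator w := by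
    ext s
    have hmem : (s, x) ∈ S ↔ s ∈ Ici (g x / ε) := by rw [mem_Ici, div_le_iff₀ hε, mul_comm]; rfl
    simp only [indicator_apply, hmem, Function.comp_apply]
  have hinter (x : X) : (Ici (g x / ε) ∩ Ioi 0 : Set ℝ) =ᵐ[volume] Ioi (g x / ε) := by
    have : Ioi (g x / ε) ∩ Ioi 0 = Ioi (g x / ε) :=
      inter_eq_left.mpr (Ioi_subset_Ioi (div_nonneg (hg0 x) hε.le))
    rw [← this]
    exact Ioi_ae_eq_Ici.symm.inter (ae_eq_refl _)
  calc ∫⁻ s in Ioi 0, w s * γ {x | g x ≤ ε * s}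
      = ∫⁻ s in Ioi 0, ∫⁻ x, S.indicator (w ∘ Prod.fst) (s, x) ∂γ := by
        refine lintegral_congr fun s => ?_
        rw [fibre_fst, lintegral_indicator_const (measurableSet_le hgm measurable_const)]
    _ = ∫⁻ x, (∫⁻ s in Ioi 0, S.indicator (w ∘ Prod.fst) (s, x)) ∂γ :=
        lintegral_lintegral_swap hF.aemeasurable
    _ = ∫⁻ x, ENNReal.ofReal (ε / (g x + ε)) ∂γ := by
        refine lintegral_congr fun x => ?_
        have hgx : -1 < g x / ε := by linarith [div_nonneg (hg0 x) hε.le]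
        rw [fibre_snd, lintegral_indicator measurableSet_Ici,
          Measure.restrict_restrict measurableSet_Ici, Measure.restrict_congr_set (hinter x),
          lintegral_Ioi_add_one_rpow_neg_two hgx]
        congr 1
        field_simp

lemma uGamma_eq_mul_integral_inv (γ : Measure X) [IsFiniteMeasure γ] {g : X → ℝ}
    (hgm : Measurable g) (hg0 : ∀ x, 0 ≤ g x) {ε : ℝ} (hε : 0 < ε) :
    uGamma γ g ε = ε * ∫ x, (g x + ε)⁻¹ ∂γ := by
  have hw (s : ℝ) : 0 ≤ (s + 1) ^ (-2 : ℝ) := by rw [rpow_neg_two_eq_inv_sq]; positivity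
  have hmono : Monotone fun s => (γ {x | g x ≤ ε * s}).toReal := fun s t hst =>
    ENNReal.toReal_mono (measure_ne_top _ _)
      (measure_mono fun _ hx => hx.trans (mul_le_mul_of_nonneg_left hst hε.le))
  have hgε (x : X) : 0 < g x + ε := by linarith [hg0 x]
  rw [uGamma, ← integral_const_mul,
    integral_eq_lintegral_of_nonneg_ae
      (Eventually.of_forall fun s => mul_nonneg (hw s) ENNReal.toReal_nonneg)
      ((by fun_prop : Measurable fun s : ℝ => (s + 1) ^ (-2 : ℝ)).mul
        hmono.measurable).aestronglyMeasurable,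
    integral_eq_lintegral_of_nonneg_ae
      (Eventually.of_forall fun x => mul_nonneg hε.le (inv_nonneg.mpr (hgε x).le))
      (by fun_prop : Measurable fun x => ε * (g x + ε)⁻¹).aestronglyMeasurable]
  congr 1
  simp_rw [← div_eq_mul_inv,
    ← setLIntegral_Ioi_add_one_rpow_neg_two_mul_measure_sublevel γ hgm hg0 hε,
    ENNReal.ofReal_mul (hw _), ENNReal.ofReal_toReal (measure_ne_top _ _)]

lemma integral_add_rpow_neg_le (μ : Measure X) [IsFiniteMeasure μ] {g : X → ℝ}
    (hgm : Measurable g) (hg0 : ∀ x, 0 ≤ g x) {r ε : ℝ} (hr : 1 ≤ r) (hε : 0 < ε) :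
    ∫ x, (g x + ε) ^ (-r) ∂μ ≤ ε ^ (1 - r) * ∫ x, (g x + ε)⁻¹ ∂μ := by
  have hgε (x : X) : 0 < g x + ε := by linarith [hg0 x]
  have hint : Integrable (fun x => (g x + ε)⁻¹) μ :=
    .of_bound (by fun_prop) ε⁻¹ <| Eventually.of_forall fun x => by
      rw [norm_inv, Real.norm_of_nonneg (hgε x).le]
      exact inv_anti₀ hε (by linarith [hg0 x])
  rw [← integral_const_mul]
  refine integral_mono_of_nonneg (Eventually.of_forall fun x => (rpow_pos_of_pos (hgε x) _).le)
    (hint.const_mul _) (Eventually.of_forall fun x => ?_)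
  calc (g x + ε) ^ (-r) = (g x + ε) ^ (1 - r) * (g x + ε)⁻¹ := by
        rw [← rpow_neg_one, ← rpow_add (hgε x)]; ring_nf
    _ ≤ ε ^ (1 - r) * (g x + ε)⁻¹ :=
        mul_le_mul_of_nonneg_right (rpow_le_rpow_of_nonpos hε (by linarith [hg0 x]) (by linarith))
          (inv_nonneg.mpr (hgε x).le)

end

theorem stmt0 {X : Type*} [MeasurableSpace X] (γ : Measure X) [IsProbabilityMeasure γ]
    (g : X → ℝ) (hgm : Measurable g) (hg0 : ∀ x, 0 ≤ g x)
    (r ε : ℝ) (hr : 1 ≤ r) (hε : 0 < ε) :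
    ∫ x, (g x + ε) ^ (-r) ∂γ ≤ r * ε ^ (-r) * uGamma γ g ε := by
  have hu := uGamma_eq_mul_integral_inv γ hgm hg0 hε
  have hu0 : 0 ≤ uGamma γ g ε :=
    hu ▸ mul_nonneg hε.le (integral_nonneg fun x => inv_nonneg.mpr (by linarith [hg0 x]))
  calc ∫ x, (g x + ε) ^ (-r) ∂γ ≤ ε ^ (1 - r) * ∫ x, (g x + ε)⁻¹ ∂γ :=
        integral_add_rpow_neg_le γ hgm hg0 hr hε
    _ = ε ^ (-r) * uGamma γ g ε := by rw [hu, sub_eq_neg_add, rpow_add hε, rpow_one]; ring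
    _ ≤ r * ε ^ (-r) * uGamma γ g ε := by
        rw [mul_assoc]
        exact le_mul_of_one_le_left (mul_nonneg (rpow_nonneg hε.le _) hu0) hr
end
end

section
/- For any finite signed Borel measure μ on ℝ^k and any h ∈ ℝ^k, the total variation norm of the difference between μ and its shift μ_h satisfies ‖μ_h − μ‖_TV ≤ 2 σ(μ, |h|/2), where σ(μ,t) = sup{∫ ∂_e φ dμ : φ ∈ C₀^∞(ℝ^k), ‖φ‖_∞ ≤ t, ‖∂_e φ‖_∞ ≤ 1, |e|=1}. -/
open MeasureTheory Real
noncomputable section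

/-! Given a test function `φ` with `|φ| ≤ 1`, write `h = ‖h‖ • e` with `‖e‖ = 1` and put
`ψ x = ∫₀^‖h‖ φ (x + s • e) / 2 ds`. As a convolution of `φ` with a finite measure carried by a
segment, `ψ` is smooth with compact support; moreover `|ψ| ≤ ‖h‖ / 2` and, by the fundamental
theorem of calculus, `∂ₑψ x = (φ (x + h) - φ x) / 2`, so `|∂ₑψ| ≤ 1`. Hence
`∫ φ d(μ_h - μ) = ∫ (φ (· + h) - φ) dμ = 2 ∫ ∂ₑψ dμ ≤ 2 σ(μ, ‖h‖/2)`. -/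

namespace MeasureTheory

variable {α : Type*} [MeasurableSpace α]

lemma integrable_of_abs_le {m : Measure α} [IsFiniteMeasure m] {f : α → ℝ} {C : ℝ}
    (hf : Measurable f) (hfC : ∀ x, |f x| ≤ C) : Integrable f m :=
  .of_bound hf.aestronglyMeasurable C (ae_of_all _ hfC)

lemma Measure.toSignedMeasure_map (m : Measure α) [IsFiniteMeasure m] {T : α → α}
    (hT : Measurable T) : (m.map T).toSignedMeasure = m.toSignedMeasure.map T := by
  ext s hs
  rw [VectorMeasure.map_apply _ hT hs, Measure.toSignedMeasure_apply_measurable hs,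
    Measure.toSignedMeasure_apply_measurable (hT hs), map_measureReal_apply hT hs]

end MeasureTheory

section SignedIntegral

variable {α : Type*} [MeasurableSpace α] {f g : α → ℝ} {C D : ℝ}

lemma sInt_eq_integral_sub_integral {μ : SignedMeasure α} {c d : Measure α}
    [IsFiniteMeasure c] [IsFiniteMeasure d] (hμ : μ = c.toSignedMeasure - d.toSignedMeasure)
    (hf : Measurable f) (hfC : ∀ x, |f x| ≤ C) :
    sInt μ f = ∫ x, f x ∂c - ∫ x, f x ∂d := by
  set p := μ.toJordanDecomposition.posPart
  set n := μ.toJordanDecomposition.negPart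
  have hpn : p + d = n + c := by
    rw [← Measure.toSignedMeasure_eq_toSignedMeasure_iff, Measure.toSignedMeasure_add,
      Measure.toSignedMeasure_add]
    have := μ.toSignedMeasure_toJordanDecomposition.trans hμ
    rw [JordanDecomposition.toSignedMeasure] at this
    linear_combination (norm := abel) this
  have key := congrArg (fun m => ∫ x, f x ∂m) hpn
  simp only [integral_add_measure (integrable_of_abs_le hf hfC)
    (integrable_of_abs_le hf hfC)] at key
  unfold sInt
  linarith

variable (μ ν : SignedMeasure α)

lemma sInt_sub_measure (hf : Measurable f) (hfC : ∀ x, |f x| ≤ C) :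
    sInt (μ - ν) f = sInt μ f - sInt ν f := by
  set pμ := μ.toJordanDecomposition.posPart
  set nμ := μ.toJordanDecomposition.negPart
  set pν := ν.toJordanDecomposition.posPart
  set nν := ν.toJordanDecomposition.negPart
  have hdec : μ - ν = (pμ + nν).toSignedMeasure - (nμ + pν).toSignedMeasure := by
    conv_lhs => rw [← μ.toSignedMeasure_toJordanDecomposition,
      ← ν.toSignedMeasure_toJordanDecomposition]
    simp only [JordanDecomposition.toSignedMeasure, Measure.toSignedMeasure_add]
    abel
  rw [sInt_eq_integral_sub_integral hdec hf hfC,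
    integral_add_measure (integrable_of_abs_le hf hfC) (integrable_of_abs_le hf hfC),
    integral_add_measure (integrable_of_abs_le hf hfC) (integrable_of_abs_le hf hfC)]
  unfold sInt
  ring

lemma sInt_map {T : α → α} (hT : Measurable T) (hf : Measurable f) (hfC : ∀ x, |f x| ≤ C) :
    sInt (μ.map T) f = sInt μ (fun x => f (T x)) := by
  set p := μ.toJordanDecomposition.posPart
  set n := μ.toJordanDecomposition.negPart
  have hdec : μ.map T = (p.map T).toSignedMeasure - (n.map T).toSignedMeasure := by
    rw [Measure.toSignedMeasure_map p hT, Measure.toSignedMeasure_map n hT]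
    conv_lhs => rw [← μ.toSignedMeasure_toJordanDecomposition]
    exact map_sub (VectorMeasure.mapGm T) p.toSignedMeasure n.toSignedMeasure
  rw [sInt_eq_integral_sub_integral hdec hf hfC, integral_map hT.aemeasurable
    hf.aestronglyMeasurable, integral_map hT.aemeasurable hf.aestronglyMeasurable]
  rfl

lemma sInt_sub (hf : Measurable f) (hfC : ∀ x, |f x| ≤ C) (hg : Measurable g)
    (hgC : ∀ x, |g x| ≤ D) : sInt μ (fun x => f x - g x) = sInt μ f - sInt μ g := by
  unfold sInt
  rw [integral_sub (integrable_of_abs_le hf hfC) (integrable_of_abs_le hg hgC),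
    integral_sub (integrable_of_abs_le hf hfC) (integrable_of_abs_le hg hgC)]
  ring

lemma sInt_div_const (f : α → ℝ) (c : ℝ) : sInt μ (fun x => f x / c) = sInt μ f / c := by
  simp only [sInt, integral_div, sub_div]

lemma abs_sInt_le (hfC : ∀ x, |f x| ≤ C) : |sInt μ f| ≤ C * μ.totalVariation.real Set.univ := by
  have hbound (m : Measure α) [IsFiniteMeasure m] : |∫ x, f x ∂m| ≤ C * m.real Set.univ :=
    norm_integral_le_of_norm_le_const (f := f) (ae_of_all _ hfC)
  rw [SignedMeasure.totalVariation, measureReal_add_apply, mul_add]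
  exact (abs_sub _ _).trans (add_le_add (hbound _) (hbound _))

end SignedIntegral

section IntegralAlong

variable {E : Type*} [NormedAddCommGroup E] [NormedSpace ℝ E] {φ : E → ℝ} {e : E} {L C : ℝ}

def integralAlong (φ : E → ℝ) (e : E) (L : ℝ) (x : E) : ℝ := ∫ s in 0..L, φ (x + s • e)

lemma hasDerivAt_integralAlong_comp_line (hφ : Continuous φ) (x : E) :
    HasDerivAt (fun r : ℝ => integralAlong φ e L (x + r • e)) (φ (x + L • e) - φ x) 0 := by
  set g : ℝ → ℝ := fun s => φ (x + s • e)
  have hg : Continuous g := by fun_prop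
  set F : ℝ → ℝ := fun r => ∫ s in 0..r, g s
  have hF (r : ℝ) : HasDerivAt F (g r) r := (hg.integral_hasStrictDerivAt 0 r).hasDerivAt
  have hline : (fun r : ℝ => integralAlong φ e L (x + r • e)) = fun r => F (L + r) - F r := by
    funext r
    have hshift (s : ℝ) : φ (x + r • e + s • e) = g (s + r) := by
      simp only [g, add_smul]; congr 1; abel
    simp only [integralAlong, hshift, intervalIntegral.integral_comp_add_right g r, zero_add, F]
    rw [intervalIntegral.integral_interval_sub_left (hg.intervalIntegrable _ _)
      (hg.intervalIntegrable _ _)]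
  have hderiv := ((hF (L + 0)).comp 0 ((hasDerivAt_id (0 : ℝ)).const_add L)).sub (hF 0)
  rw [hline]
  exact hderiv.congr_deriv (by simp [g])

lemma fderiv_integralAlong_apply (hφ : Continuous φ) {x : E}
    (hd : DifferentiableAt ℝ (integralAlong φ e L) x) :
    fderiv ℝ (integralAlong φ e L) x e = φ (x + L • e) - φ x := by
  have hline : HasDerivAt (fun r : ℝ => x + r • e) e 0 := by
    simpa using ((hasDerivAt_id (0 : ℝ)).smul_const e).const_add x
  have hd' : HasFDerivAt (integralAlong φ e L) (fderiv ℝ (integralAlong φ e L) x)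
      (x + (0 : ℝ) • e) := by simpa using hd.hasFDerivAt
  have hcomp : HasDerivAt (fun r : ℝ => integralAlong φ e L (x + r • e))
      (fderiv ℝ (integralAlong φ e L) x e) 0 :=
    hd'.comp_hasDerivAt (f := fun r : ℝ => x + r • e) 0 hline
  exact hcomp.unique (hasDerivAt_integralAlong_comp_line hφ x)

lemma abs_integralAlong_le (hφC : ∀ x, |φ x| ≤ C) (x : E) :
    |integralAlong φ e L x| ≤ C * |L| := by
  simpa [integralAlong] using intervalIntegral.norm_integral_le_of_norm_le_const
    (a := 0) (b := L) (f := fun s => φ (x + s • e)) fun s _ => hφC _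

lemma hasCompactSupport_integralAlong (hφ : HasCompactSupport φ) :
    HasCompactSupport (integralAlong φ e L) := by
  have hK : IsCompact ((fun p : ℝ × E => p.2 - p.1 • e) '' (Set.uIcc 0 L ×ˢ tsupport φ)) :=
    (isCompact_uIcc.prod hφ).image (by fun_prop)
  refine .intro hK fun x hx => ?_
  have hzero : Set.EqOn (fun s => φ (x + s • e)) 0 (Set.uIcc 0 L) := fun s hs =>
    by_contra fun hne => hx ⟨(s, x + s • e), ⟨hs, subset_tsupport φ hne⟩, by simp⟩
  rw [integralAlong, intervalIntegral.integral_congr hzero, Pi.zero_def,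
    intervalIntegral.integral_zero]

variable [MeasurableSpace E] [BorelSpace E]

lemma integralAlong_eq_convolution (hφ : Continuous φ) (hL : 0 ≤ L) :
    integralAlong φ e L = convolution (fun _ => (1 : ℝ)) φ (ContinuousLinearMap.mul ℝ ℝ)
      ((volume.restrict (Set.Ioc 0 L)).map fun s => -(s • e)) := by
  funext x
  simp only [convolution_def, ContinuousLinearMap.mul_apply', one_mul]
  rw [integral_map (by fun_prop) (Continuous.aestronglyMeasurable (by fun_prop)), integralAlong,
    intervalIntegral.integral_of_le hL]
  simp

lemma contDiff_integralAlong {n : ℕ∞} (hφ : ContDiff ℝ n φ) (hφc : HasCompactSupport φ)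
    (hL : 0 ≤ L) : ContDiff ℝ n (integralAlong φ e L) := by
  have : IsFiniteMeasure (volume.restrict (Set.Ioc 0 L)) :=
    isFiniteMeasure_restrict.2 measure_Ioc_lt_top.ne
  rw [integralAlong_eq_convolution hφ.continuous hL]
  exact hφc.contDiff_convolution_right _ (integrable_const _).locallyIntegrable hφ

end IntegralAlong

lemma sInt_shiftSM_sub {E : Type*} [MeasurableSpace E] [Add E] [MeasurableAdd E]
    (μ : SignedMeasure E) (h : E) {φ : E → ℝ} {C : ℝ} (hφ : Measurable φ)
    (hφC : ∀ x, |φ x| ≤ C) :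
    sInt (shiftSM μ h - μ) φ = sInt μ (fun x => φ (x + h) - φ x) := by
  rw [sInt_sub_measure _ _ hφ hφC, shiftSM, sInt_map _ (measurable_add_const h) hφ hφC]
  exact (sInt_sub μ (hφ.comp (measurable_add_const h)) (fun _ => hφC _) hφ hφC).symm

section Sigma

variable {k : ℕ} (μ : SignedMeasure (Ek k)) {t : ℝ}

lemma le_sigmaSM {φ : Ek k → ℝ} {e : Ek k} (hφ : ContDiff ℝ (⊤ : ℕ∞) φ)
    (hφc : HasCompactSupport φ) (he : ‖e‖ = 1) (hφt : ∀ x, |φ x| ≤ t)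
    (hφe : ∀ x, |fderiv ℝ φ x e| ≤ 1) :
    sInt μ (fun x => fderiv ℝ φ x e) ≤ sigmaSM μ t :=
  le_csSup ⟨1 * μ.totalVariation.real Set.univ, by
    rintro _ ⟨ψ, e', -, -, -, -, hψe, rfl⟩
    exact (le_abs_self _).trans (abs_sInt_le μ hψe)⟩ ⟨φ, e, hφ, hφc, he, hφt, hφe, rfl⟩

lemma sigmaSM_nonneg (ht : 0 ≤ t) : 0 ≤ sigmaSM μ t := by
  rcases k.eq_zero_or_pos with rfl | hk
  · refine Real.sSup_nonneg fun r ⟨φ, e, _, _, he, _⟩ => ?_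
    simp [Subsingleton.elim e 0] at he
  · simpa [sInt] using le_sigmaSM μ (φ := 0) (e := EuclideanSpace.single ⟨0, hk⟩ 1)
      contDiff_const .zero (by simp) (by simpa) (by simp)

lemma sInt_sub_comp_add_le_sigmaSM {φ : Ek k → ℝ} (hφ : ContDiff ℝ (⊤ : ℕ∞) φ)
    (hφc : HasCompactSupport φ) (hφ1 : ∀ x, |φ x| ≤ 1) {h : Ek k} (hh : h ≠ 0) :
    sInt μ (fun x => φ (x + h) - φ x) ≤ 2 * sigmaSM μ (‖h‖ / 2) := by
  have hL : ‖h‖ ≠ 0 := norm_ne_zero_iff.2 hh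
  obtain ⟨e, he, hLe⟩ : ∃ e : Ek k, ‖e‖ = 1 ∧ ‖h‖ • e = h :=
    ⟨‖h‖⁻¹ • h, by rw [norm_smul, norm_inv, norm_norm, inv_mul_cancel₀ hL],
      by rw [smul_smul, mul_inv_cancel₀ hL, one_smul]⟩
  set ψ := integralAlong (fun x => φ x / 2) e ‖h‖
  have hφc2 : HasCompactSupport fun x => φ x / 2 := hφc.comp_left (g := (· / 2)) (zero_div 2)
  have hψ : ContDiff ℝ (⊤ : ℕ∞) ψ := contDiff_integralAlong (by fun_prop) hφc2 (norm_nonneg h)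
  have hψe (x : Ek k) : fderiv ℝ ψ x e = (φ (x + h) - φ x) / 2 := by
    rw [fderiv_integralAlong_apply (by fun_prop) (hψ.differentiable (by simp) x), hLe, sub_div]
  have hψt (x : Ek k) : |ψ x| ≤ ‖h‖ / 2 := by
    have hφ2 (y : Ek k) : |φ y / 2| ≤ 1 / 2 := by
      rw [abs_div, abs_two]; exact div_le_div_of_nonneg_right (hφ1 y) zero_le_two
    simpa [ψ, div_eq_inv_mul] using abs_integralAlong_le (e := e) (L := ‖h‖) hφ2 x
  have hψe1 (x : Ek k) : |fderiv ℝ ψ x e| ≤ 1 := by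
    rw [hψe, abs_div, abs_two, div_le_one two_pos]
    exact (abs_sub _ _).trans (by linarith [hφ1 x, hφ1 (x + h)])
  have hσ := le_sigmaSM μ hψ (hasCompactSupport_integralAlong hφc2) he hψt hψe1
  simp only [hψe, sInt_div_const] at hσ
  linarith

end Sigma

theorem stmt4 {k : ℕ} (μ : SignedMeasure (Ek k)) (h : Ek k) :
    tvSM (shiftSM μ h - μ) ≤ 2 * sigmaSM μ (‖h‖ / 2) := by
  refine csSup_le ⟨0, 0, contDiff_const, .zero, by simp, by simp [sInt]⟩ ?_
  rintro _ ⟨φ, hφ, hφc, hφ1, rfl⟩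
  rw [sInt_shiftSM_sub μ h hφ.continuous.measurable hφ1]
  rcases eq_or_ne h 0 with rfl | hh
  · simpa [sInt] using sigmaSM_nonneg μ le_rfl
  · exact sInt_sub_comp_add_le_sigmaSM μ hφ hφc hφ1 hh
end
end

section
/- Let f = (f₁,…,f_k) : ℝ^n → ℝ^k be smooth, M_f the Malliavin matrix with entries ⟨∇f_i,∇f_j⟩ and Δ_f = det M_f. Then for each j, the directional derivative of Δ_f along ∇f_j satisfies the pointwise bound |⟨∇f_j, ∇Δ_f⟩| ≤ 2 (Σ_m |∇f_m|)^{2k} Σ_i ‖D²f_i‖_{HS}, where ‖·‖_{HS} is the Hilbert–Schmidt norm of the Hessian matrices D²f_i. -/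
open MeasureTheory Real
noncomputable section

/-!
Write `M` for the Malliavin matrix, `S = ∑ₘ ‖∇fₘ‖` and `H = ∑ᵢ ‖D²fᵢ‖_HS`. The determinant is
multilinear in the rows, so `∂ᵥ det M = ∑_c det (M with row c replaced by ∂ᵥ M_c)`, and by the
product rule `∂ᵥ M_ca = ⟪∇f_c, D²f_a v⟫ + ⟪D²f_c v, ∇f_a⟫`. Hadamard's inequality, weakened to
`|det A| ≤ ∏ᵢ ∑ⱼ |A i j|`, bounds the `c`-th term by `‖v‖ (‖∇f_c‖ H + ‖D²f_c‖_HS S) (S²)^(k-1)`,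
since every row of `M` has `ℓ¹`-norm at most `S²`. Summing over `c` gives `2 ‖v‖ S H (S²)^(k-1)`,
and `v = ∇f_j` has norm at most `S`.
-/

open Matrix

lemma EuclideanSpace.norm_le_sum_abs {ι : Type*} [Fintype ι] (x : EuclideanSpace ℝ ι) :
    ‖x‖ ≤ ∑ i, |x i| := by
  refine abs_le_of_sq_le_sq' ?_ (by positivity) |>.2
  calc ‖x‖ ^ 2 = ∑ i, |x i| ^ 2 := by simp [EuclideanSpace.norm_sq_eq]
    _ ≤ (∑ i, |x i|) ^ 2 := Finset.sum_sq_le_sq_sum_of_nonneg fun _ _ => abs_nonneg _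

theorem Matrix.abs_det_le_prod_norm_row {k : ℕ} (M : Matrix (Fin k) (Fin k) ℝ) :
    |M.det| ≤ ∏ i, ‖WithLp.toLp 2 (M i)‖ := by
  have : Fact (Module.finrank ℝ (EuclideanSpace ℝ (Fin k)) = k) := ⟨finrank_euclideanSpace_fin⟩
  let b := EuclideanSpace.basisFun (Fin k) ℝ
  have hvol := b.toBasis.orientation.abs_volumeForm_apply_le fun i => WithLp.toLp 2 (M i)
  rwa [b.toBasis.orientation.volumeForm_robust' b, Module.Basis.det_apply,
    show b.toBasis.toMatrix (fun i => WithLp.toLp 2 (M i)) = Mᵀ by ext; rfl, det_transpose] at hvol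

theorem Matrix.abs_det_le_prod_sum_abs {k : ℕ} (M : Matrix (Fin k) (Fin k) ℝ) :
    |M.det| ≤ ∏ i, ∑ j, |M i j| :=
  M.abs_det_le_prod_norm_row.trans <| Finset.prod_le_prod (fun _ _ => norm_nonneg _)
    fun i _ => EuclideanSpace.norm_le_sum_abs (WithLp.toLp 2 (M i))

theorem Matrix.abs_sum_det_updateRow_le {k : ℕ} (M R : Matrix (Fin k) (Fin k) ℝ) {B : ℝ}
    (hM : ∀ i, ∑ j, |M i j| ≤ B) :
    |∑ i, (M.updateRow i (R i)).det| ≤ (∑ i, ∑ j, |R i j|) * B ^ (k - 1) := by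
  rw [Finset.sum_mul]
  refine (Finset.abs_sum_le_sum_abs _ _).trans <| Finset.sum_le_sum fun c _ => ?_
  have hB : 0 ≤ B := (Finset.sum_nonneg fun _ _ => abs_nonneg _).trans (hM c)
  calc |(M.updateRow c (R c)).det|
      ≤ ∏ i, ∑ j, |M.updateRow c (R c) i j| := abs_det_le_prod_sum_abs _
    _ = (∑ j, |R c j|) * ∏ i ∈ Finset.univ.erase c, ∑ j, |M i j| := by
      rw [← Finset.mul_prod_erase _ _ (Finset.mem_univ c), updateRow_self]
      congr 1
      refine Finset.prod_congr rfl fun i hi => ?_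
      rw [updateRow_ne (Finset.ne_of_mem_erase hi)]
    _ ≤ (∑ j, |R c j|) * B ^ (k - 1) := by
      gcongr
      calc ∏ i ∈ Finset.univ.erase c, ∑ j, |M i j| ≤ ∏ _i ∈ Finset.univ.erase c, B :=
            Finset.prod_le_prod (fun _ _ => Finset.sum_nonneg fun _ _ => abs_nonneg _)
              fun i _ => hM i
        _ = B ^ (k - 1) := by simp [Finset.card_erase_of_mem]

theorem abs_inner_le_hsN {n : ℕ} (A : Ek n →L[ℝ] Ek n) (u w : Ek n) :
    |(inner ℝ (A u) w : ℝ)| ≤ hsN A * (‖u‖ * ‖w‖) := by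
  let e : Fin n → Ek n := fun i => EuclideanSpace.single i 1
  let M : Fin n × Fin n → ℝ := fun p => inner ℝ (A (e p.1)) (e p.2)
  have hsum : ∀ v : Ek n, v = ∑ i, v i • e i := fun v => by
    simpa [e] using ((EuclideanSpace.basisFun (Fin n) ℝ).sum_repr v).symm
  have hexpand : (inner ℝ (A u) w : ℝ) = ∑ p, M p * (u p.1 * w p.2) := by
    conv_lhs => rw [hsum u, hsum w]
    simp only [map_sum, map_smul, sum_inner, inner_sum, real_inner_smul_left,
      real_inner_smul_right, Fintype.sum_prod_type, M]
    rw [Finset.sum_comm]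
    exact Finset.sum_congr rfl fun _ _ => Finset.sum_congr rfl fun _ _ => by ring
  have hhs : hsN A = √(∑ p, M p ^ 2) := by rw [hsN, Fintype.sum_prod_type]
  have hnorm : ‖u‖ * ‖w‖ = √(∑ p : Fin n × Fin n, (u p.1 * w p.2) ^ 2) := by
    simp only [EuclideanSpace.norm_eq, Real.norm_eq_abs, sq_abs, Fintype.sum_prod_type, mul_pow,
      ← Finset.sum_mul_sum, Real.sqrt_mul (Finset.sum_nonneg fun _ _ => sq_nonneg _)]
  rw [hexpand, hhs, hnorm, abs_le]
  constructor
  · have := Real.sum_mul_le_sqrt_mul_sqrt Finset.univ (fun p => -M p) fun p => u p.1 * w p.2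
    simp only [neg_mul, Finset.sum_neg_distrib, neg_sq] at this
    linarith
  · exact Real.sum_mul_le_sqrt_mul_sqrt _ _ _

theorem fderiv_det_apply {𝕜 E ι : Type*} [NontriviallyNormedField 𝕜] [NormedAddCommGroup E]
    [NormedSpace 𝕜 E] [Fintype ι] [DecidableEq ι] {A : E → Matrix ι ι 𝕜} {x : E}
    (hA : ∀ i j, DifferentiableAt 𝕜 (fun y => A y i j) x) (v : E) :
    fderiv 𝕜 (fun y => (A y).det) x v =
      ∑ i, ((A x).updateRow i fun j => fderiv 𝕜 (fun y => A y i j) x v).det := by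
  let D : ContinuousMultilinearMap 𝕜 (fun _ : ι => ι → 𝕜) 𝕜 :=
    ⟨detRowAlternating.toMultilinearMap, continuous_id.matrix_det⟩
  have hrows : HasFDerivAt (fun y i j => A y i j)
      (ContinuousLinearMap.pi fun i => ContinuousLinearMap.pi fun j =>
        fderiv 𝕜 (fun y => A y i j) x) x :=
    hasFDerivAt_pi.2 fun i => hasFDerivAt_pi.2 fun j => (hA i j).hasFDerivAt
  rw [show (fun y => (A y).det) = D ∘ fun y i j => A y i j from rfl,
    ((D.hasFDerivAt _).comp x hrows).fderiv]
  exact D.linearDeriv_apply _ _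

theorem ContDiff.differentiable_gradient {E : Type*} [NormedAddCommGroup E]
    [InnerProductSpace ℝ E] [CompleteSpace E] {f : E → ℝ} (hf : ContDiff ℝ 2 f) :
    Differentiable ℝ (gradient f) :=
  (InnerProductSpace.toDual ℝ E).symm.toContinuousLinearEquiv.differentiable.comp
    ((hf.fderiv_right (m := 1) (by norm_num)).differentiable one_ne_zero)

theorem abs_fderiv_inner_gradient_le {n : ℕ} {f g : Ek n → ℝ} {x : Ek n}
    (hf : DifferentiableAt ℝ (gradient f) x) (hg : DifferentiableAt ℝ (gradient g) x) (v : Ek n) :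
    |fderiv ℝ (fun y => (inner ℝ (gradient f y) (gradient g y) : ℝ)) x v| ≤
      ‖v‖ * (‖gradient f x‖ * hsN (hess g x) + hsN (hess f x) * ‖gradient g x‖) := by
  rw [fderiv_inner_apply ℝ hf hg v, real_inner_comm _ (gradient f x)]
  calc _ ≤ _ := abs_add_le _ _
    _ ≤ hsN (hess g x) * (‖v‖ * ‖gradient f x‖) + hsN (hess f x) * (‖v‖ * ‖gradient g x‖) :=
      add_le_add (abs_inner_le_hsN _ _ _) (abs_inner_le_hsN _ _ _)
    _ = _ := by ring

theorem abs_fderiv_malDet_le {n k : ℕ} {f : Ek n → Ek k} (hf : ContDiff ℝ 2 f) (x v : Ek n) :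
    |fderiv ℝ (malDet f) x v| ≤
      2 * ‖v‖ * (∑ m, ‖gradient (fun y => f y m) x‖) * (∑ i, hsN (hess (fun y => f y i) x)) *
        ((∑ m, ‖gradient (fun y => f y m) x‖) ^ 2) ^ (k - 1) := by
  set S := ∑ m, ‖gradient (fun y => f y m) x‖
  set H := ∑ i, hsN (hess (fun y => f y i) x)
  have hgrad : ∀ i, Differentiable ℝ (gradient fun y => f y i) := fun i =>
    (contDiff_euclidean.1 hf i).differentiable_gradient
  have hnorm_le : ∀ i, ‖gradient (fun y => f y i) x‖ ≤ S := fun i =>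
    Finset.single_le_sum (f := fun m => ‖gradient (fun y => f y m) x‖)
      (fun _ _ => norm_nonneg _) (Finset.mem_univ i)
  rw [show malDet f = fun y => (mall f y).det from rfl,
    fderiv_det_apply (A := mall f) (fun i j => ((hgrad i x).inner ℝ (hgrad j x))) v]
  refine (abs_sum_det_updateRow_le _ _ fun i => ?_).trans (mul_le_mul_of_nonneg_right ?_ ?_)
  · calc ∑ j, |mall f x i j|
          ≤ ∑ j, ‖gradient (fun y => f y i) x‖ * ‖gradient (fun y => f y j) x‖ :=
          Finset.sum_le_sum fun j _ => abs_real_inner_le_norm _ _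
      _ = ‖gradient (fun y => f y i) x‖ * S := (Finset.mul_sum _ _ _).symm
      _ ≤ S ^ 2 := by rw [sq]; gcongr; exact hnorm_le i
  · calc _ ≤ ∑ i, ∑ j, ‖v‖ * (‖gradient (fun y => f y i) x‖ * hsN (hess (fun y => f y j) x) +
            hsN (hess (fun y => f y i) x) * ‖gradient (fun y => f y j) x‖) :=
          Finset.sum_le_sum fun i _ => Finset.sum_le_sum fun j _ =>
            abs_fderiv_inner_gradient_le (hgrad i x) (hgrad j x) v
      _ = 2 * ‖v‖ * S * H := by
        simp only [mul_add, Finset.sum_add_distrib, ← Finset.mul_sum, ← Finset.sum_mul]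
        ring
  · positivity

theorem stmt15 {n k : ℕ} (f : Ek n → Ek k) (hf : ContDiff ℝ (⊤ : ℕ∞) f)
    (j : Fin k) (x : Ek n) :
    |(inner ℝ (gradient (fun y => f y j) x) (gradient (fun y => malDet f y) x) : ℝ)| ≤
      2 * (∑ m, ‖gradient (fun y => f y m) x‖) ^ (2 * k) *
        ∑ i, hsN (hess (fun y => f y i) x) := by
  set S := ∑ m, ‖gradient (fun y => f y m) x‖
  set H := ∑ i, hsN (hess (fun y => f y i) x)
  have hS : ‖gradient (fun y => f y j) x‖ ≤ S :=
    Finset.single_le_sum (f := fun m => ‖gradient (fun y => f y m) x‖)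
      (fun _ _ => norm_nonneg _) (Finset.mem_univ j)
  have hH : 0 ≤ H := Finset.sum_nonneg fun _ _ => Real.sqrt_nonneg _
  rw [real_inner_comm, ← InnerProductSpace.toDual_apply_apply, toDual_gradient]
  calc _ ≤ 2 * ‖gradient (fun y => f y j) x‖ * S * H * (S ^ 2) ^ (k - 1) :=
        abs_fderiv_malDet_le (hf.of_le (WithTop.coe_le_coe.2 le_top)) x _
    _ ≤ 2 * S * S * H * (S ^ 2) ^ (k - 1) := by gcongr
    _ = 2 * S ^ (2 * k) * H := by
      rw [pow_mul, ← pow_sub_one_mul j.pos.ne' (S ^ 2)]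
      ring
end
end
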